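/- arXiv:2102.04917 — 4 statements merged into one kernel-verified Lean document; each statement's English description precedes it below -/
import Mathlib

section
/- Let R be a commutative ring with unity, S = R[x₁,…,x_k], M an S-module, and M̄ = (Mₙ)_{n∈ℕ} an increasing filtering of M with degrees γ̄ ∈ ℕᵏ. For m ∈ ℕ, let Mᵐ := ⊕_{n≤m} Mₙyⁿ ⊆ Rees(M̄). Then Mᵐ generates Rees(M̄) as an S[y]-module if and only if M_m tightly generates M̄, i.e. for every n ∈ ℕ and v ∈ Mₙ there exist m₁,…,m_r ≤ m, elements v_j ∈ M_{m_j}, and polynomials p₁,…,p_r ∈ S such that v = p₁v₁ + ⋯ + p_r v_r and n ≥ deg_γ(p_j) + m_j for each j. -/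
/-!
The twist `xᵢ ↦ xᵢ y^{γᵢ}` sends `x^d yᵉ` to `x^d y^{deg_γ d + e}`, so the `yᵃ`-coefficient of the
twist of any `q ∈ S[y]` has `γ̄`-degree at most `a`. Hence the elements of `⊕ₙ M yⁿ` whose
`yᵇ`-coefficient is tightly generated by `M_m` in degree `b` form an `S[y]`-submodule; it contains
`Mᵐ`, so if `Mᵐ` generates `Rees(M̄)` it contains every `v yⁿ` with `v ∈ Mₙ`. Conversely, if
`deg_γ p + m' ≤ n` then `(p • u) yⁿ = q • (u y^{m'})`, where `q` replaces each monomial `x^d` of `p`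
by `x^d y^{n - m' - deg_γ d}`; since `Rees(M̄)` is spanned by the `v yⁿ` with `v ∈ Mₙ`, tight
generation makes `Mᵐ` generate it.
-/

open scoped ENNReal

/-- A (generalized) length function on the category of `R`-modules, with values in
`ℝ≥0 ∪ {∞} = ℝ≥0∞`: it vanishes on the zero module, is invariant under isomorphism, is additive
on short exact sequences (equivalently, `λ(M) = λ(N) + λ(M/N)` for every submodule `N ≤ M`), and
is the supremum of its values on finitely generated submodules. -/
structure LengthFunction (R : Type) [CommRing R] : Type 1 where
  l : (M : Type) → [AddCommGroup M] → [Module R M] → ℝ≥0∞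
  l_zero : ∀ (M : Type) [AddCommGroup M] [Module R M], Subsingleton M → l M = 0
  l_congr : ∀ (M N : Type) [AddCommGroup M] [Module R M] [AddCommGroup N] [Module R N],
      (M ≃ₗ[R] N) → l M = l N
  l_add : ∀ (M : Type) [AddCommGroup M] [Module R M] (N : Submodule R M),
      l M = l N + l (M ⧸ N)
  l_fg_sup : ∀ (M : Type) [AddCommGroup M] [Module R M],
      l M = ⨆ (N : Submodule R M) (_ : N.FG), l N

/-- `Sₙ · V`: the `R`-submodule of `M` generated by the products `p • v` with `p ∈ Sₙ` (the
polynomials of total degree at most `n` in `S = R[x₁,…,x_k]`) and `v ∈ V`. -/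
def degSmul {R : Type} [CommRing R] (k : ℕ) {M : Type} [AddCommGroup M] [Module R M]
    [Module (MvPolynomial (Fin k) R) M] [IsScalarTower R (MvPolynomial (Fin k) R) M]
    (n : ℕ) (V : Submodule R M) : Submodule R M :=
  Submodule.span R
    {m : M | ∃ p ∈ MvPolynomial.restrictTotalDegree (Fin k) R n, ∃ v ∈ V, p • v = m}
/-- The ring homomorphism `S[y] → S[X]` (for `S = R[x₁,…,x_k]`) sending `y ↦ X` and
`xᵢ ↦ xᵢ·X^{γᵢ}`; it encodes the action on the blow-up (Rees) module: `xᵢ` acts with degree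
`γᵢ` and `y` with degree `1`. -/
noncomputable def twist {R : Type} [CommRing R] {k : ℕ} (γ : Fin k → ℕ) :
    Polynomial (MvPolynomial (Fin k) R) →+* Polynomial (MvPolynomial (Fin k) R) :=
  Polynomial.eval₂RingHom
    (MvPolynomial.eval₂Hom (Polynomial.C.comp MvPolynomial.C)
      (fun i => Polynomial.C (MvPolynomial.X i) * Polynomial.X ^ γ i))
    Polynomial.X

/-- Auxiliary lemma: the coefficients of `twist γ p` are compatible with any filtration `𝓜`
which is increasing and satisfies `xᵢ • 𝓜 n ⊆ 𝓜 (n + γᵢ)`. -/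
theorem twist_coeff_smul_mem {R : Type} [CommRing R] {k : ℕ} {M : Type} [AddCommGroup M]
    [Module R M] [Module (MvPolynomial (Fin k) R) M]
    [IsScalarTower R (MvPolynomial (Fin k) R) M]
    (γ : Fin k → ℕ) (𝓜 : ℕ → Submodule R M) (hmono : Monotone 𝓜)
    (hx : ∀ (i : Fin k) (n : ℕ), ∀ m ∈ 𝓜 n,
      (MvPolynomial.X i : MvPolynomial (Fin k) R) • m ∈ 𝓜 (n + γ i))
    (p : Polynomial (MvPolynomial (Fin k) R)) :
    ∀ a b : ℕ, ∀ m ∈ 𝓜 b, ((twist γ p).coeff a) • m ∈ 𝓜 (a + b) := by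
  classical
  set S := MvPolynomial (Fin k) R
  set T : Set (Polynomial S) :=
    {q | ∀ a b : ℕ, ∀ m ∈ 𝓜 b, (q.coeff a) • m ∈ 𝓜 (a + b)} with hT
  have hadd : ∀ q q' : Polynomial S, q ∈ T → q' ∈ T → q + q' ∈ T := by
    intro q q' hq hq' a b m hm
    rw [Polynomial.coeff_add, add_smul]
    exact (𝓜 (a + b)).add_mem (hq a b m hm) (hq' a b m hm)
  have hmul : ∀ q q' : Polynomial S, q ∈ T → q' ∈ T → q * q' ∈ T := by
    intro q q' hq hq' a b m hm
    rw [Polynomial.coeff_mul, Finset.sum_smul]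
    refine Submodule.sum_mem _ ?_
    intro x hxmem
    rw [mul_smul]
    have h1 : q'.coeff x.2 • m ∈ 𝓜 (x.2 + b) := hq' x.2 b m hm
    have h2 := hq x.1 (x.2 + b) _ h1
    rw [Finset.HasAntidiagonal.mem_antidiagonal] at hxmem
    rwa [← add_assoc, hxmem] at h2
  have hCC : ∀ r : R, (Polynomial.C (MvPolynomial.C r : S)) ∈ T := by
    intro r a b m hm
    rcases Nat.eq_zero_or_pos a with rfl | ha
    · rw [Polynomial.coeff_C_zero]
      have : (MvPolynomial.C r : S) • m = r • m := by
        rw [← MvPolynomial.algebraMap_eq, algebraMap_smul]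
      rw [this, zero_add]
      exact (𝓜 b).smul_mem r hm
    · rw [Polynomial.coeff_C, if_neg (by omega), zero_smul]
      exact (𝓜 (a + b)).zero_mem
  have hX : (Polynomial.X : Polynomial S) ∈ T := by
    intro a b m hm
    rw [Polynomial.coeff_X]
    by_cases h : (1 : ℕ) = a
    · rw [if_pos h, one_smul]
      exact hmono (by omega) hm
    · rw [if_neg h, zero_smul]
      exact (𝓜 (a + b)).zero_mem
  have hXi : ∀ i : Fin k, (Polynomial.C (MvPolynomial.X i : S) * Polynomial.X ^ γ i) ∈ T := by
    intro i a b m hm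
    rw [Polynomial.coeff_C_mul, Polynomial.coeff_X_pow]
    by_cases h : a = γ i
    · rw [if_pos h, mul_one]
      have := hx i b m hm
      rwa [h, add_comm]
    · rw [if_neg h, mul_zero, zero_smul]
      exact (𝓜 (a + b)).zero_mem
  have hinner : ∀ s : S,
      (MvPolynomial.eval₂Hom (Polynomial.C.comp MvPolynomial.C)
        (fun i => Polynomial.C (MvPolynomial.X i) * Polynomial.X ^ γ i) s) ∈ T := by
    intro s
    induction s using MvPolynomial.induction_on with
    | C r => simpa using hCC r
    | add s s' hs hs' => rw [map_add]; exact hadd _ _ hs hs'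
    | mul_X s i hs =>
        rw [map_mul]
        refine hmul _ _ hs ?_
        simpa using hXi i
  suffices h : twist γ p ∈ T by exact h
  induction p using Polynomial.induction_on with
  | C s =>
      show Polynomial.eval₂ _ _ (Polynomial.C s) ∈ T
      rw [Polynomial.eval₂_C]
      exact hinner s
  | add q q' hq hq' =>
      rw [map_add]; exact hadd _ _ hq hq'
  | monomial n s hq =>
      have : (Polynomial.C s * Polynomial.X ^ (n + 1)) =
          (Polynomial.C s * Polynomial.X ^ n) * Polynomial.X := by ring
      rw [this, map_mul]
      refine hmul _ _ hq ?_
      show Polynomial.eval₂ _ _ Polynomial.X ∈ T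
      rw [Polynomial.eval₂_X]
      exact hX

/-- The ambient module `⊕ₙ M yⁿ` of the blow-up construction: the polynomial module
`M[y] = ⊕ₙ M yⁿ` over `S = R[x₁,…,x_k]`, regarded as an `S[y]`-module through `twist γ`, so
that `xᵢ • (v yʲ) = (xᵢ v) y^{j+γᵢ}` and `y • (v yʲ) = v y^{j+1}`. -/
def ReesAmb (R : Type) [CommRing R] {k : ℕ} (_γ : Fin k → ℕ) (M : Type) [AddCommGroup M]
    [Module R M] [Module (MvPolynomial (Fin k) R) M] : Type :=
  PolynomialModule (MvPolynomial (Fin k) R) M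

section Rees
variable {R : Type} [CommRing R] {k : ℕ} {M : Type} [AddCommGroup M] [Module R M]
  [Module (MvPolynomial (Fin k) R) M] [IsScalarTower R (MvPolynomial (Fin k) R) M]

noncomputable instance (γ : Fin k → ℕ) : AddCommGroup (ReesAmb R γ M) :=
  inferInstanceAs (AddCommGroup (PolynomialModule (MvPolynomial (Fin k) R) M))

/-- The twisted `S[y]`-module structure on `⊕ₙ M yⁿ`. -/
noncomputable instance (γ : Fin k → ℕ) :
    Module (Polynomial (MvPolynomial (Fin k) R)) (ReesAmb R γ M) :=
  Module.compHom (PolynomialModule (MvPolynomial (Fin k) R) M) (twist γ)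

noncomputable instance (γ : Fin k → ℕ) : Module R (ReesAmb R γ M) :=
  inferInstanceAs (Module R (PolynomialModule (MvPolynomial (Fin k) R) M))

/-- The underlying finitely supported function `ℕ →₀ M` of an element of `ReesAmb R γ M`;
`ReesAmb.coe f n` is the coefficient of `yⁿ` in `f`. -/
def ReesAmb.coe {γ : Fin k → ℕ} (f : ReesAmb R γ M) : ℕ →₀ M := PolynomialModule.coeff f

/-- The blow-up (Rees) module `Rees(M̄) = ⊕ₙ Mₙ yⁿ` of an increasing filtering `M̄ = (Mₙ)ₙ`
with degrees `γ̄`: the `S[y]`-submodule of `ReesAmb R γ M` consisting of the elements whose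
`n`-th coefficient lies in `Mₙ` for every `n`. -/
noncomputable def reesSubmodule (γ : Fin k → ℕ) (𝓜 : ℕ → Submodule R M)
    (hmono : Monotone 𝓜)
    (hx : ∀ (i : Fin k) (n : ℕ), ∀ m ∈ 𝓜 n,
      (MvPolynomial.X i : MvPolynomial (Fin k) R) • m ∈ 𝓜 (n + γ i)) :
    Submodule (Polynomial (MvPolynomial (Fin k) R)) (ReesAmb R γ M) where
  carrier := {f | ∀ n, ReesAmb.coe f n ∈ 𝓜 n}
  zero_mem' := by intro n; exact (𝓜 n).zero_mem
  add_mem' := by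
    intro f g hf hg n
    exact (𝓜 n).add_mem (hf n) (hg n)
  smul_mem' := by
    intro p f hf n
    let g : PolynomialModule (MvPolynomial (Fin k) R) M := f
    have h : ((twist γ p) • g).coeff n ∈ 𝓜 n := by
      rw [PolynomialModule.smul_apply]
      refine Submodule.sum_mem _ ?_
      intro x hxmem
      rw [Finset.HasAntidiagonal.mem_antidiagonal] at hxmem
      have hmem := twist_coeff_smul_mem γ 𝓜 hmono hx p x.1 x.2 (g.coeff x.2) (hf x.2)
      rwa [hxmem] at hmem
    exact h

/-- The `n`-th graded piece `Mₙ yⁿ` of the blow-up module. -/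
noncomputable def gradedPiece (γ : Fin k → ℕ) (𝓜 : ℕ → Submodule R M) (n : ℕ) :
    Submodule R (ReesAmb R γ M) :=
  (𝓜 n).map (((PolynomialModule.coeffLinearEquiv (MvPolynomial (Fin k) R) R).symm.toLinearMap.comp
    (Finsupp.lsingle n : M →ₗ[R] (ℕ →₀ M))) : M →ₗ[R] ReesAmb R γ M)

end Rees



section Twist

variable {R : Type} [CommRing R] {k : ℕ}

open MvPolynomial
open Finsupp (weight)

theorem twist_monomial (γ : Fin k → ℕ) (e : ℕ) (d : Fin k →₀ ℕ) (c : R) :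
    twist γ (Polynomial.monomial e (monomial d c)) =
      Polynomial.monomial (weight γ d + e) (monomial d c) := by
  simp only [twist, Polynomial.coe_eval₂RingHom, Polynomial.eval₂_monomial, eval₂Hom_monomial,
    RingHom.coe_comp, Function.comp_apply, mul_pow, ← pow_mul, Finsupp.prod,
    Finset.prod_mul_distrib, Finset.prod_pow_eq_pow_sum, ← map_pow, ← map_prod]
  rw [← Polynomial.C_mul_X_pow_eq_monomial, monomial_eq, Finsupp.prod, map_mul, pow_add,
    Finsupp.weight_apply, Finsupp.sum]
  simp only [smul_eq_mul, mul_comm (d _)]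
  ring

theorem coeff_twist_mem_restrictSupport (γ : Fin k → ℕ) (q : Polynomial (MvPolynomial (Fin k) R))
    (a : ℕ) : (twist γ q).coeff a ∈ restrictSupport R {d | weight γ d ≤ a} := by
  induction q using Polynomial.induction_on' generalizing a with
  | add p q hp hq => rw [map_add, Polynomial.coeff_add]; exact add_mem (hp a) (hq a)
  | monomial e s =>
    induction s using MvPolynomial.induction_on' with
    | add s t hs ht => rw [map_add, map_add, Polynomial.coeff_add]; exact add_mem hs ht
    | monomial d c =>
      rw [twist_monomial, Polynomial.coeff_monomial]
      split_ifs with h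
      · intro d' hd'
        rw [Finset.mem_singleton.mp (support_monomial_subset hd')]
        exact h ▸ Nat.le_add_right _ _
      · exact zero_mem _

theorem exists_twist_eq_monomial (γ : Fin k → ℕ) {e : ℕ} {p : MvPolynomial (Fin k) R}
    (hp : p ∈ restrictSupport R {d | weight γ d ≤ e}) :
    ∃ q, twist γ q = Polynomial.monomial e p := by
  refine ⟨∑ d ∈ p.support, Polynomial.monomial (e - weight γ d) (monomial d (coeff d p)), ?_⟩
  rw [map_sum]
  conv_rhs => rw [← support_sum_monomial_coeff p, map_sum]
  refine Finset.sum_congr rfl fun d hd => ?_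
  have : weight γ d ≤ e := hp hd
  rw [twist_monomial, Nat.add_sub_cancel' this]

end Twist

section TightSpan

variable {R : Type} [CommRing R] {k : ℕ} {M : Type} [AddCommGroup M] [Module R M]
  [Module (MvPolynomial (Fin k) R) M] [IsScalarTower R (MvPolynomial (Fin k) R) M]

open MvPolynomial
open Finsupp (weight)

/-- The part of `M` that `M_m` tightly generates in filtration degree `n`. -/
def tightSpan (γ : Fin k → ℕ) (𝓜 : ℕ → Submodule R M) (m n : ℕ) : Submodule R M :=
  Submodule.span R {w | ∃ m' ≤ m, ∃ p : MvPolynomial (Fin k) R,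
    (∀ d ∈ p.support, weight γ d + m' ≤ n) ∧ ∃ u ∈ 𝓜 m', p • u = w}

variable (γ : Fin k → ℕ) (𝓜 : ℕ → Submodule R M) (m : ℕ)

theorem smul_mem_tightSpan {a b : ℕ} {p : MvPolynomial (Fin k) R}
    (hp : p ∈ restrictSupport R {d | weight γ d ≤ a}) {w : M} (hw : w ∈ tightSpan γ 𝓜 m b) :
    p • w ∈ tightSpan γ 𝓜 m (a + b) := by
  induction hw using Submodule.span_induction with
  | mem w hw =>
    obtain ⟨m', hm', p', hp', u, hu, rfl⟩ := hw
    refine Submodule.subset_span ⟨m', hm', p * p', fun d hd => ?_, u, hu, mul_smul p p' u⟩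
    obtain ⟨d₁, hd₁, d₂, hd₂, rfl⟩ := Finset.mem_add.mp (support_mul p p' hd)
    have h₁ : weight γ d₁ ≤ a := hp hd₁
    have h₂ := hp' d₂ hd₂
    rw [map_add]
    omega
  | zero => rw [smul_zero]; exact zero_mem _
  | add x y _ _ hx hy => rw [smul_add]; exact add_mem hx hy
  | smul r x _ hx => rw [smul_comm]; exact Submodule.smul_mem _ r hx

theorem mem_tightSpan_iff (n : ℕ) (v : M) :
    v ∈ tightSpan γ 𝓜 m n ↔
      ∃ (r : ℕ) (ms : Fin r → ℕ) (vs : Fin r → M) (ps : Fin r → MvPolynomial (Fin k) R),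
        (∀ j, ms j ≤ m) ∧ (∀ j, vs j ∈ 𝓜 (ms j)) ∧ v = ∑ j, ps j • vs j ∧
        ∀ j, ∀ d ∈ (ps j).support, weight γ d + ms j ≤ n := by
  constructor
  · intro hv
    obtain ⟨r, c, g, hsum⟩ := Submodule.mem_span_set'.mp hv
    choose ms hms ps hps vs hvs hpv using fun j => (g j).2
    refine ⟨r, ms, vs, fun j => c j • ps j, hms, hvs, ?_,
      fun j d hd => hps j d (MvPolynomial.support_smul hd)⟩
    rw [← hsum]
    exact Finset.sum_congr rfl fun j _ => by rw [smul_assoc, hpv]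
  · rintro ⟨r, ms, vs, ps, hms, hvs, rfl, hdeg⟩
    exact Submodule.sum_mem _ fun j _ =>
      Submodule.subset_span ⟨ms j, hms j, ps j, hdeg j, vs j, hvs j, rfl⟩

end TightSpan

namespace ReesAmb

variable {R : Type} [CommRing R] {k : ℕ} {M : Type} [AddCommGroup M] [Module R M]
  [Module (MvPolynomial (Fin k) R) M] (γ : Fin k → ℕ)

open MvPolynomial
open Finsupp (weight)

variable (R) in
/-- `v ↦ v yⁿ`. -/
noncomputable def single (n : ℕ) : M →ₗ[R] ReesAmb R γ M :=
  (PolynomialModule.coeffLinearEquiv (MvPolynomial (Fin k) R) R).symm.toLinearMap.comp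
    (Finsupp.lsingle n)

theorem coe_single (n : ℕ) (v : M) : coe (single R γ n v) = Finsupp.single n v := rfl

theorem coe_smul (q : Polynomial (MvPolynomial (Fin k) R)) (f : ReesAmb R γ M) (b : ℕ) :
    coe (q • f) b =
      ∑ x ∈ Finset.HasAntidiagonal.antidiagonal b, (twist γ q).coeff x.1 • coe f x.2 :=
  PolynomialModule.smul_apply (twist γ q) (f : PolynomialModule (MvPolynomial (Fin k) R) M) b

theorem sum_single_coe (f : ReesAmb R γ M) :
    ∑ b ∈ (coe f).support, single R γ b (coe f b) = f := by
  apply PolynomialModule.coeff_injective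
  exact (PolynomialModule.coeff_sum _ _).trans (coe f).sum_single

theorem exists_smul_single_eq {m' n : ℕ} {p : MvPolynomial (Fin k) R}
    (hp : ∀ d ∈ p.support, weight γ d + m' ≤ n) (u : M) :
    ∃ q : Polynomial (MvPolynomial (Fin k) R), q • single R γ m' u = single R γ n (p • u) := by
  by_cases hm' : m' ≤ n
  · obtain ⟨q, hq⟩ := exists_twist_eq_monomial γ (e := n - m') (p := p)
      fun d hd => show weight γ d ≤ n - m' by have := hp d hd; omega
    refine ⟨q, ?_⟩
    change twist γ q • PolynomialModule.single (MvPolynomial (Fin k) R) m' u =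
      PolynomialModule.single (MvPolynomial (Fin k) R) n (p • u)
    rw [hq, PolynomialModule.monomial_smul_single, Nat.sub_add_cancel hm']
  · have hp0 : p = 0 := support_eq_empty.mp (Finset.eq_empty_of_forall_notMem fun d hd => by
      have := hp d hd; omega)
    exact ⟨0, by rw [hp0, zero_smul, zero_smul, map_zero]⟩

theorem single_mem_reesSubmodule [IsScalarTower R (MvPolynomial (Fin k) R) M]
    (𝓜 : ℕ → Submodule R M) (hmono : Monotone 𝓜)
    (hx : ∀ (i : Fin k) (n : ℕ), ∀ m ∈ 𝓜 n,
      (MvPolynomial.X i : MvPolynomial (Fin k) R) • m ∈ 𝓜 (n + γ i))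
    {n : ℕ} {v : M} (hv : v ∈ 𝓜 n) : single R γ n v ∈ reesSubmodule γ 𝓜 hmono hx := by
  intro b
  rw [coe_single, Finsupp.single_apply]
  split_ifs with h
  · exact h ▸ hv
  · exact zero_mem _

end ReesAmb

section Generation

variable {R : Type} [CommRing R] {k : ℕ} {M : Type} [AddCommGroup M] [Module R M]
  [Module (MvPolynomial (Fin k) R) M] [IsScalarTower R (MvPolynomial (Fin k) R) M]
  (γ : Fin k → ℕ) (𝓜 : ℕ → Submodule R M) (hmono : Monotone 𝓜)
  (hx : ∀ (i : Fin k) (n : ℕ), ∀ m ∈ 𝓜 n,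
    (MvPolynomial.X i : MvPolynomial (Fin k) R) • m ∈ 𝓜 (n + γ i))
  (m : ℕ)

/-- `Mᵐ = ⊕_{n ≤ m} Mₙ yⁿ`. -/
def reesTruncation : Set (reesSubmodule γ 𝓜 hmono hx) :=
  {f | ∀ n, m < n → ReesAmb.coe (f : ReesAmb R γ M) n = 0}

noncomputable def tightRees : Submodule (Polynomial (MvPolynomial (Fin k) R)) (ReesAmb R γ M) where
  carrier := {f | ∀ b, ReesAmb.coe f b ∈ tightSpan γ 𝓜 m b}
  zero_mem' _ := zero_mem _
  add_mem' hf hg b := add_mem (hf b) (hg b)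
  smul_mem' q f hf b := by
    rw [ReesAmb.coe_smul]
    refine Submodule.sum_mem _ fun x hxb => ?_
    rw [← Finset.HasAntidiagonal.mem_antidiagonal.mp hxb]
    exact smul_mem_tightSpan γ 𝓜 m (coeff_twist_mem_restrictSupport γ q x.1) (hf x.2)

theorem le_tightSpan_of_span_reesTruncation_eq_top
    (hspan : Submodule.span (Polynomial (MvPolynomial (Fin k) R))
      (reesTruncation γ 𝓜 hmono hx m) = ⊤) (n : ℕ) :
    𝓜 n ≤ tightSpan γ 𝓜 m n := by
  intro v hv
  have hle : Submodule.span (Polynomial (MvPolynomial (Fin k) R)) (reesTruncation γ 𝓜 hmono hx m) ≤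
      (tightRees γ 𝓜 m).comap (reesSubmodule γ 𝓜 hmono hx).subtype := by
    refine Submodule.span_le.mpr fun f hf b => ?_
    change ReesAmb.coe (f : ReesAmb R γ M) b ∈ _
    rcases lt_or_ge m b with hb | hb
    · rw [hf b hb]
      exact zero_mem _
    · refine Submodule.subset_span ⟨b, hb, 1, fun d hd => ?_, _, f.2 b, one_smul _ _⟩
      rw [Finset.mem_singleton.mp (AddMonoidAlgebra.support_coeff_one_subset hd), map_zero,
        zero_add]
  let e : reesSubmodule γ 𝓜 hmono hx :=
    ⟨ReesAmb.single R γ n v, ReesAmb.single_mem_reesSubmodule γ 𝓜 hmono hx hv⟩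
  simpa [e, ReesAmb.coe_single] using hle (hspan ▸ Submodule.mem_top : e ∈ _) n

theorem span_reesTruncation_eq_top_of_le_tightSpan (h : ∀ n, 𝓜 n ≤ tightSpan γ 𝓜 m n) :
    Submodule.span (Polynomial (MvPolynomial (Fin k) R)) (reesTruncation γ 𝓜 hmono hx m) = ⊤ := by
  set U := (Submodule.span (Polynomial (MvPolynomial (Fin k) R))
    (reesTruncation γ 𝓜 hmono hx m)).map (reesSubmodule γ 𝓜 hmono hx).subtype
  have hsingle : ∀ b, ∀ v ∈ 𝓜 b, ReesAmb.single R γ b v ∈ U := by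
    intro b v hv
    obtain ⟨r, ms, vs, ps, hms, hvs, rfl, hdeg⟩ := (mem_tightSpan_iff γ 𝓜 m b v).mp (h b hv)
    rw [map_sum]
    refine Submodule.sum_mem _ fun j _ => ?_
    obtain ⟨q, hq⟩ := ReesAmb.exists_smul_single_eq γ (hdeg j) (vs j)
    rw [← hq]
    refine U.smul_mem q ⟨⟨_, ReesAmb.single_mem_reesSubmodule γ 𝓜 hmono hx (hvs j)⟩,
      Submodule.subset_span fun n hn => ?_, rfl⟩
    rw [ReesAmb.coe_single, Finsupp.single_eq_of_ne (by have := hms j; omega)]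
  refine Submodule.eq_top_iff'.mpr fun x => ?_
  obtain ⟨y, hy, hyx⟩ : (x : ReesAmb R γ M) ∈ U := by
    rw [← ReesAmb.sum_single_coe γ (x : ReesAmb R γ M)]
    exact Submodule.sum_mem _ fun b _ => hsingle b _ (x.2 b)
  rwa [← Subtype.ext hyx]

theorem span_reesTruncation_eq_top_iff :
    Submodule.span (Polynomial (MvPolynomial (Fin k) R)) (reesTruncation γ 𝓜 hmono hx m) = ⊤ ↔
      ∀ n, 𝓜 n ≤ tightSpan γ 𝓜 m n :=
  ⟨le_tightSpan_of_span_reesTruncation_eq_top γ 𝓜 hmono hx m,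
    span_reesTruncation_eq_top_of_le_tightSpan γ 𝓜 hmono hx m⟩

end Generation

theorem stmt_2_general {R : Type} [CommRing R] {k : ℕ} {M : Type} [AddCommGroup M] [Module R M]
    [Module (MvPolynomial (Fin k) R) M] [IsScalarTower R (MvPolynomial (Fin k) R) M]
    (γ : Fin k → ℕ) (𝓜 : ℕ → Submodule R M)
    (hmono : Monotone 𝓜)
    (hx : ∀ (i : Fin k) (n : ℕ), ∀ m ∈ 𝓜 n,
      (MvPolynomial.X i : MvPolynomial (Fin k) R) • m ∈ 𝓜 (n + γ i))
    (m : ℕ) :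
    Submodule.span (Polynomial (MvPolynomial (Fin k) R))
        {f : reesSubmodule γ 𝓜 hmono hx | ∀ n, m < n → ReesAmb.coe (f : ReesAmb R γ M) n = 0}
        = ⊤ ↔
    ∀ (n : ℕ), ∀ v ∈ 𝓜 n,
      ∃ (r : ℕ) (ms : Fin r → ℕ) (vs : Fin r → M) (ps : Fin r → MvPolynomial (Fin k) R),
        (∀ j, ms j ≤ m) ∧ (∀ j, vs j ∈ 𝓜 (ms j)) ∧
        (v = ∑ j, ps j • vs j) ∧
        (∀ j, ∀ d ∈ (ps j).support, (∑ i, d i * γ i) + ms j ≤ n) := by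
  refine (span_reesTruncation_eq_top_iff γ 𝓜 hmono hx m).trans (forall_congr' fun n => ?_)
  simp only [SetLike.le_def, mem_tightSpan_iff, Finsupp.weight_eq_sum, smul_eq_mul]

/-- Let `R` be a commutative ring, `S = R[x₁,…,x_k]`, `M` an `S`-module and
`M̄ = (Mₙ)ₙ` an increasing filtering of `M` with degrees `γ̄ ∈ ℕᵏ`.  For `m ∈ ℕ` let
`Mᵐ = ⊕_{n ≤ m} Mₙ yⁿ ⊆ Rees(M̄)`.  Then `Mᵐ` generates `Rees(M̄)` as an `S[y]`-module if and
only if `M_m` tightly generates `M̄`: for every `n` and `v ∈ Mₙ` there are `m₁,…,m_r ≤ m`,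
`v_j ∈ M_{m_j}` and `p₁,…,p_r ∈ S` with `v = Σ pⱼ • vⱼ` and `deg_γ(pⱼ) + mⱼ ≤ n` for each `j`
(each monomial of `pⱼ` having `γ̄`-degree `≤ n - mⱼ`). -/
theorem stmt_2 {R : Type} [CommRing R] {k : ℕ} {M : Type} [AddCommGroup M] [Module R M]
    [Module (MvPolynomial (Fin k) R) M] [IsScalarTower R (MvPolynomial (Fin k) R) M]
    (γ : Fin k → ℕ) (𝓜 : ℕ → Submodule R M)
    (hmono : Monotone 𝓜) (hexh : (⨆ n, 𝓜 n) = ⊤)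
    (hx : ∀ (i : Fin k) (n : ℕ), ∀ m ∈ 𝓜 n,
      (MvPolynomial.X i : MvPolynomial (Fin k) R) • m ∈ 𝓜 (n + γ i))
    (m : ℕ) :
    Submodule.span (Polynomial (MvPolynomial (Fin k) R))
        {f : reesSubmodule γ 𝓜 hmono hx | ∀ n, m < n → ReesAmb.coe (f : ReesAmb R γ M) n = 0}
        = ⊤ ↔
    ∀ (n : ℕ), ∀ v ∈ 𝓜 n,
      ∃ (r : ℕ) (ms : Fin r → ℕ) (vs : Fin r → M) (ps : Fin r → MvPolynomial (Fin k) R),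
        (∀ j, ms j ≤ m) ∧ (∀ j, vs j ∈ 𝓜 (ms j)) ∧
        (v = ∑ j, ps j • vs j) ∧
        (∀ j, ∀ d ∈ (ps j).support, (∑ i, d i * γ i) + ms j ≤ n) :=
  stmt_2_general γ 𝓜 hmono hx m
end

section
/- Let R be a commutative ring with unity, λ a length function on R-modules, S = R[x₁,…,x_k], and M̄ an ℕ-graded S-module of degree γ̄ ∈ ℕᵏ. Assume γᵢ > 0 for i = 1,…,k, λ(Mₙ) < ∞ for every n ∈ ℕ, and M is a Noetherian S-module. Then there exists a polynomial p(t) ∈ ℝ[t] such that the formal power series F_{M̄}(t) = Σ_{n∈ℕ} λ(Mₙ)tⁿ equals p(t)/∏_{i=1}^{k}(1 − t^{γᵢ}) in ℝ[[t]]. -/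
/-!
Induction on the number of generators of `S` over `R` that act nontrivially on `M`. For a
generator `y` of degree `g`, put `K = ker y` and `C = M ⧸ y M`; the exact sequences
`0 → Kₙ → Mₙ → M_{n+g} → C_{n+g} → 0`, together with `Cₙ = Mₙ` for `n < g`, give
`F_M(t) (1 - t^g) = F_C(t) - t^g F_K(t)`. Both `K` and `C` are Noetherian graded `S`-modules
killed by `y`, so the induction hypothesis applies to them. When every generator acts by zero,
`M` is Noetherian over `R`, so only finitely many `Mₙ` are nonzero and `F_M` is a polynomial.
-/

open scoped ENNReal

open DirectSum PowerSeries

namespace LengthFunction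

variable {R : Type} [CommRing R] (L : LengthFunction R) {M M' : Type}
  [AddCommGroup M] [Module R M] [AddCommGroup M'] [Module R M']

theorem l_bot : L.l (⊥ : Submodule R M) = 0 :=
  L.l_zero _ inferInstance

theorem l_eq_l_ker_add_l_range (f : M →ₗ[R] M') :
    L.l M = L.l (LinearMap.ker f) + L.l (LinearMap.range f) := by
  rw [L.l_add M (LinearMap.ker f), L.l_congr _ _ f.quotKerEquivRange]

theorem l_comap_of_injective {f : M' →ₗ[R] M} (hf : Function.Injective f) (A : Submodule R M) :
    L.l (A.comap f) = L.l ↥(LinearMap.range f ⊓ A) := by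
  rw [L.l_congr _ _ (Submodule.equivMapOfInjective f hf _), Submodule.map_comap_eq]

theorem l_eq_l_ker_inf_add_l_map (f : M →ₗ[R] M') (A : Submodule R M) :
    L.l A = L.l ↥(LinearMap.ker f ⊓ A) + L.l (A.map f) := by
  rw [L.l_eq_l_ker_add_l_range (f ∘ₗ A.subtype), LinearMap.ker_comp,
    L.l_comap_of_injective A.injective_subtype, Submodule.range_subtype, inf_comm,
    LinearMap.range_comp, Submodule.range_subtype]

theorem l_mono {A B : Submodule R M} (h : A ≤ B) : L.l A ≤ L.l B := by
  rw [← L.l_congr _ _ (Submodule.comapSubtypeEquivOfLe h), L.l_add B]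
  exact le_self_add

end LengthFunction

section Grading

variable {R S M : Type} [CommRing R] [Ring S] [SMul R S] [AddCommGroup M] [Module R M]
  [Module S M] [IsScalarTower R S M] {ι : Type*}

def Submodule.inducedGrading (P : Submodule S M) (𝓜 : ι → Submodule R M) (i : ι) :
    Submodule R P :=
  (𝓜 i).comap (P.subtype.restrictScalars R)

def Submodule.quotientGrading (P : Submodule S M) (𝓜 : ι → Submodule R M) (i : ι) :
    Submodule R (M ⧸ P) :=
  (𝓜 i).map (P.mkQ.restrictScalars R)

variable (P : Submodule S M) {𝓜 : ι → Submodule R M}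

theorem Submodule.smul_mem_inducedGrading {s : S} {i j : ι}
    (h : ∀ m ∈ 𝓜 i, s • m ∈ 𝓜 j) : ∀ m ∈ P.inducedGrading 𝓜 i, s • m ∈ P.inducedGrading 𝓜 j :=
  fun m hm => h m hm

theorem Submodule.smul_mem_quotientGrading {s : S} {i j : ι}
    (h : ∀ m ∈ 𝓜 i, s • m ∈ 𝓜 j) : ∀ c ∈ P.quotientGrading 𝓜 i, s • c ∈ P.quotientGrading 𝓜 j := by
  rintro _ ⟨m, hm, rfl⟩
  exact ⟨s • m, h m hm, rfl⟩

theorem LengthFunction.l_inducedGrading (L : LengthFunction R) (i : ι) :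
    L.l (P.inducedGrading 𝓜 i) = L.l ↥(P.restrictScalars R ⊓ 𝓜 i) := by
  rw [Submodule.inducedGrading, L.l_comap_of_injective Subtype.val_injective,
    LinearMap.range_restrictScalars, Submodule.range_subtype]

theorem LengthFunction.l_eq_l_inf_add_l_quotientGrading (L : LengthFunction R) (i : ι) :
    L.l (𝓜 i) = L.l ↥(P.restrictScalars R ⊓ 𝓜 i) + L.l (P.quotientGrading 𝓜 i) := by
  rw [L.l_eq_l_ker_inf_add_l_map (P.mkQ.restrictScalars R), LinearMap.ker_restrictScalars,
    Submodule.ker_mkQ]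
  rfl

theorem LengthFunction.l_inducedGrading_le (L : LengthFunction R) (i : ι) :
    L.l (P.inducedGrading 𝓜 i) ≤ L.l (𝓜 i) := by
  rw [L.l_inducedGrading]
  exact L.l_mono inf_le_right

theorem LengthFunction.l_quotientGrading_le (L : LengthFunction R) (i : ι) :
    L.l (P.quotientGrading 𝓜 i) ≤ L.l (𝓜 i) := by
  rw [L.l_eq_l_inf_add_l_quotientGrading P]
  exact le_add_self

variable [DecidableEq ι] [Decomposition 𝓜] {P}

theorem DirectSum.decompose_eq_zero_of_mem_iSup_ne {i : ι} {m : M}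
    (hm : m ∈ ⨆ (j) (_ : j ≠ i), 𝓜 j) : (decompose 𝓜 m i : M) = 0 := by
  let π : M →ₗ[R] M := (𝓜 i).subtype ∘ₗ component R ι (fun i => 𝓜 i) i ∘ₗ
    (decomposeLinearEquiv 𝓜).toLinearMap
  have : ⨆ (j) (_ : j ≠ i), 𝓜 j ≤ LinearMap.ker π :=
    iSup₂_le fun j hj _ hx => decompose_of_mem_ne 𝓜 hx hj
  exact this hm

theorem Submodule.isInternal_inducedGrading (hP : SetLike.IsHomogeneous 𝓜 P) :
    IsInternal (P.inducedGrading 𝓜) := by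
  classical
  rw [isInternal_submodule_iff_iSupIndep_and_iSup_eq_top]
  refine ⟨fun i => Submodule.disjoint_def.mpr fun m hm hm' => ?_, ?_⟩
  · have hm'' : (m : M) ∈ ⨆ (j) (_ : j ≠ i), 𝓜 j :=
      (Submodule.gc_map_comap _).monotone_u.le_map_iSup₂ _ hm'
    exact Subtype.ext <|
      Submodule.disjoint_def.mp ((Decomposition.isInternal 𝓜).submodule_iSupIndep i) _ hm hm''
  · refine eq_top_iff.mpr fun m _ => ?_
    have hsum : ∑ i ∈ (decompose 𝓜 (m : M)).support,
        (⟨decompose 𝓜 (m : M) i, hP i m.2⟩ : P) = m :=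
      Subtype.ext (by push_cast; exact sum_support_decompose 𝓜 (m : M))
    rw [← hsum]
    exact Submodule.sum_mem _ fun i _ =>
      Submodule.mem_iSup_of_mem i (decompose 𝓜 (m : M) i).2

theorem Submodule.isInternal_quotientGrading (hP : SetLike.IsHomogeneous 𝓜 P) :
    IsInternal (P.quotientGrading 𝓜) := by
  rw [isInternal_submodule_iff_iSupIndep_and_iSup_eq_top]
  refine ⟨fun i => Submodule.disjoint_def.mpr ?_, ?_⟩
  · rintro _ ⟨u, hu, rfl⟩ hv
    simp only [Submodule.quotientGrading, ← Submodule.map_iSup] at hv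
    obtain ⟨v, hv, huv⟩ := hv
    have hu' : u = decompose 𝓜 (u - v) i := by
      rw [decompose_sub, DirectSum.sub_apply, Submodule.coe_sub,
        decompose_eq_zero_of_mem_iSup_ne hv, sub_zero, decompose_of_mem_same 𝓜 hu]
    have huvP : u - v ∈ P := by
      rw [← Submodule.Quotient.mk_eq_zero, Submodule.Quotient.mk_sub, sub_eq_zero]
      exact huv.symm
    exact (Submodule.Quotient.mk_eq_zero P).mpr (hu' ▸ hP i huvP)
  · change ⨆ i, (𝓜 i).map (P.mkQ.restrictScalars R) = ⊤
    rw [← Submodule.map_iSup, (Decomposition.isInternal 𝓜).submodule_iSup_eq_top,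
      Submodule.map_top, LinearMap.range_eq_top]
    exact Submodule.mkQ_surjective P

end Grading

section HomogeneousEndomorphism

variable {R S M : Type} [CommRing R] [CommRing S] [AddCommGroup M] [Module R M] [Module S M]
  {𝓜 : ℕ → Submodule R M} [Decomposition 𝓜] {y : S} {g : ℕ}

theorem DirectSum.decompose_smul_add (hy : ∀ n, ∀ m ∈ 𝓜 n, y • m ∈ 𝓜 (n + g))
    (n : ℕ) (m : M) : (decompose 𝓜 (y • m) (n + g) : M) = y • (decompose 𝓜 m n : M) := by
  induction m using Decomposition.inductionOn 𝓜 with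
  | zero => simp
  | @homogeneous j m =>
    rcases eq_or_ne j n with rfl | hne
    · rw [decompose_of_mem_same 𝓜 (hy j m m.2), decompose_of_mem_same 𝓜 m.2]
    · rw [decompose_of_mem_ne 𝓜 (hy j m m.2) (by omega), decompose_of_mem_ne 𝓜 m.2 hne,
        smul_zero]
  | add a b ha hb =>
    simp only [smul_add, decompose_add, DirectSum.add_apply, Submodule.coe_add, ha, hb]

theorem DirectSum.decompose_smul_of_lt (hy : ∀ n, ∀ m ∈ 𝓜 n, y • m ∈ 𝓜 (n + g))
    {d : ℕ} (hd : d < g) (m : M) : (decompose 𝓜 (y • m) d : M) = 0 := by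
  induction m using Decomposition.inductionOn 𝓜 with
  | zero => simp
  | @homogeneous j m => exact decompose_of_mem_ne 𝓜 (hy j m m.2) (by omega)
  | add a b ha hb =>
    simp only [smul_add, decompose_add, DirectSum.add_apply, Submodule.coe_add, ha, hb, add_zero]

theorem isHomogeneous_ker_lsmul (hy : ∀ n, ∀ m ∈ 𝓜 n, y • m ∈ 𝓜 (n + g)) :
    SetLike.IsHomogeneous 𝓜 (LinearMap.ker (LinearMap.lsmul S M y)) := by
  intro n m hm
  rw [LinearMap.mem_ker, LinearMap.lsmul_apply] at hm ⊢
  rw [← decompose_smul_add hy, hm, decompose_zero, DirectSum.zero_apply, ZeroMemClass.coe_zero]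

theorem isHomogeneous_range_lsmul (hy : ∀ n, ∀ m ∈ 𝓜 n, y • m ∈ 𝓜 (n + g)) :
    SetLike.IsHomogeneous 𝓜 (LinearMap.range (LinearMap.lsmul S M y)) := by
  rintro n _ ⟨u, rfl⟩
  rcases le_or_gt g n with hn | hn
  · obtain ⟨d, rfl⟩ := Nat.exists_eq_add_of_le' hn
    exact ⟨_, (decompose_smul_add hy d u).symm⟩
  · rw [LinearMap.lsmul_apply, decompose_smul_of_lt hy hn]
    exact zero_mem _

variable [SMul R S] [IsScalarTower R S M]

theorem map_lsmul_eq_range_inf (hy : ∀ n, ∀ m ∈ 𝓜 n, y • m ∈ 𝓜 (n + g)) (n : ℕ) :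
    (𝓜 n).map ((LinearMap.lsmul S M y).restrictScalars R) =
      (LinearMap.range (LinearMap.lsmul S M y)).restrictScalars R ⊓ 𝓜 (n + g) := by
  ext w
  constructor
  · rintro ⟨u, hu, rfl⟩
    exact ⟨⟨u, rfl⟩, hy n u hu⟩
  · rintro ⟨⟨u, rfl⟩, hw : y • u ∈ 𝓜 (n + g)⟩
    refine ⟨decompose 𝓜 u n, (decompose 𝓜 u n).2, ?_⟩
    simp only [LinearMap.restrictScalars_apply, LinearMap.lsmul_apply]
    rw [← decompose_smul_add hy, decompose_of_mem_same 𝓜 hw]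

theorem range_lsmul_inf_eq_bot (hy : ∀ n, ∀ m ∈ 𝓜 n, y • m ∈ 𝓜 (n + g)) {d : ℕ}
    (hd : d < g) : (LinearMap.range (LinearMap.lsmul S M y)).restrictScalars R ⊓ 𝓜 d = ⊥ := by
  rw [eq_bot_iff]
  rintro _ ⟨⟨u, rfl⟩, hw⟩
  rw [Submodule.mem_bot, ← decompose_of_mem_same 𝓜 hw]
  exact decompose_smul_of_lt hy hd u

end HomogeneousEndomorphism

theorem PowerSeries.mk_mul_one_sub_X_pow {A : Type*} [CommRing A] {b c κ : ℕ → A} {g : ℕ}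
    (h : ∀ n, b n + c (n + g) = κ n + b (n + g)) (hlow : ∀ d < g, b d = c d) :
    mk b * (1 - X ^ g) = mk c - X ^ g * mk κ := by
  ext n
  rw [mul_sub, mul_one, map_sub, map_sub, mul_comm (X ^ g), coeff_mul_X_pow', coeff_mul_X_pow']
  simp only [coeff_mk]
  split_ifs with hn
  · obtain ⟨d, rfl⟩ := Nat.exists_eq_add_of_le' hn
    rw [Nat.add_sub_cancel]
    linear_combination -h d
  · rw [hlow n (not_le.mp hn)]

theorem PowerSeries.exists_eq_coe_of_coeff_eq_zero {A : Type*} [Semiring A] {f : PowerSeries A}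
    {N : ℕ} (h : ∀ n ≥ N, coeff n f = 0) : ∃ p : Polynomial A, f = p := by
  refine ⟨trunc N f, PowerSeries.ext fun n => ?_⟩
  rw [Polynomial.coeff_coe, coeff_trunc]
  split_ifs with hn
  · rfl
  · exact h n (not_lt.mp hn)

theorem isNoetherian_of_forall_exists_smul_eq_smul {R S M : Type*} [Semiring R] [Semiring S]
    [AddCommMonoid M] [Module R M] [Module S M] [IsNoetherian S M]
    (h : ∀ s : S, ∃ r : R, ∀ m : M, s • m = r • m) : IsNoetherian R M := by
  let toS : Submodule R M ↪o Submodule S M := OrderEmbedding.ofMapLEIff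
    (fun P => { P with
      smul_mem' := fun s m hm => by
        obtain ⟨r, hr⟩ := h s
        exact hr m ▸ P.smul_mem r hm })
    fun _ _ => Iff.rfl
  rw [isNoetherian_iff']
  exact toS.wellFoundedGT

theorem exists_smul_eq_smul_of_adjoin_eq_top {R S M : Type*} [CommRing R] [CommRing S]
    [Algebra R S] [AddCommGroup M] [Module R M] [Module S M] [IsScalarTower R S M]
    {σ : Type*} {x : σ → S} (hx : Algebra.adjoin R (Set.range x) = ⊤)
    (hzero : ∀ i, ∀ m : M, x i • m = 0) (s : S) : ∃ r : R, ∀ m : M, s • m = r • m := by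
  have hs : s ∈ Algebra.adjoin R (Set.range x) := hx ▸ Algebra.mem_top
  induction hs using Algebra.adjoin_induction with
  | mem _ hs =>
    obtain ⟨i, rfl⟩ := hs
    exact ⟨0, fun m => by rw [hzero, zero_smul]⟩
  | algebraMap r => exact ⟨r, algebraMap_smul S r⟩
  | add a b _ _ ha hb =>
    obtain ⟨r, hr⟩ := ha
    obtain ⟨r', hr'⟩ := hb
    exact ⟨r + r', fun m => by rw [add_smul, add_smul, hr, hr']⟩
  | mul a b _ _ ha hb =>
    obtain ⟨r, hr⟩ := ha
    obtain ⟨r', hr'⟩ := hb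
    exact ⟨r * r', fun m => by rw [mul_smul, mul_smul, hr', hr]⟩

namespace LengthFunction

variable {R : Type} [CommRing R] (L : LengthFunction R)

-- `toReal` sends `∞` to `0`: this is `Σ λ(Mₙ) tⁿ` only when every `λ(Mₙ)` is finite.
noncomputable def hilbertSeries {M : Type} [AddCommGroup M] [Module R M]
    (𝓜 : ℕ → Submodule R M) : PowerSeries ℝ :=
  PowerSeries.mk fun n => (L.l (𝓜 n)).toReal

theorem exists_hilbertSeries_eq_coe_of_finite {M : Type} [AddCommGroup M] [Module R M]
    {𝓜 : ℕ → Submodule R M} (h : {n | 𝓜 n ≠ ⊥}.Finite) :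
    ∃ p : Polynomial ℝ, L.hilbertSeries 𝓜 = p := by
  have hbot : ∀ᶠ n in Filter.atTop, 𝓜 n = ⊥ :=
    Nat.cofinite_eq_atTop ▸ Filter.eventually_cofinite.mpr h
  obtain ⟨N, hN⟩ := Filter.eventually_atTop.mp hbot
  refine PowerSeries.exists_eq_coe_of_coeff_eq_zero (N := N) fun n hn => ?_
  rw [hilbertSeries, coeff_mk, hN n hn, l_bot, ENNReal.toReal_zero]

section HomogeneousEndomorphism

variable {S M : Type} [CommRing S] [SMul R S] [AddCommGroup M] [Module R M] [Module S M]
  [IsScalarTower R S M] {𝓜 : ℕ → Submodule R M} [Decomposition 𝓜] {y : S} {g : ℕ}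

theorem l_add_l_quotientGrading (hy : ∀ n, ∀ m ∈ 𝓜 n, y • m ∈ 𝓜 (n + g)) (n : ℕ) :
    L.l (𝓜 n) + L.l ((LinearMap.range (LinearMap.lsmul S M y)).quotientGrading 𝓜 (n + g)) =
      L.l ((LinearMap.ker (LinearMap.lsmul S M y)).inducedGrading 𝓜 n) + L.l (𝓜 (n + g)) := by
  have hker : L.l (𝓜 n) = L.l ((LinearMap.ker (LinearMap.lsmul S M y)).inducedGrading 𝓜 n) +
      L.l ↥((LinearMap.range (LinearMap.lsmul S M y)).restrictScalars R ⊓ 𝓜 (n + g)) := by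
    rw [L.l_eq_l_ker_inf_add_l_map ((LinearMap.lsmul S M y).restrictScalars R) (𝓜 n),
      map_lsmul_eq_range_inf hy, L.l_inducedGrading, LinearMap.ker_restrictScalars]
  rw [hker, L.l_eq_l_inf_add_l_quotientGrading (LinearMap.range (LinearMap.lsmul S M y)) (n + g),
    add_assoc]

theorem l_eq_l_quotientGrading_of_lt (hy : ∀ n, ∀ m ∈ 𝓜 n, y • m ∈ 𝓜 (n + g)) {d : ℕ}
    (hd : d < g) :
    L.l (𝓜 d) = L.l ((LinearMap.range (LinearMap.lsmul S M y)).quotientGrading 𝓜 d) := by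
  rw [L.l_eq_l_inf_add_l_quotientGrading (LinearMap.range (LinearMap.lsmul S M y)) d,
    range_lsmul_inf_eq_bot hy hd, l_bot, zero_add]

theorem hilbertSeries_mul_one_sub_X_pow (hy : ∀ n, ∀ m ∈ 𝓜 n, y • m ∈ 𝓜 (n + g))
    (hfin : ∀ n, L.l (𝓜 n) < ⊤) :
    L.hilbertSeries 𝓜 * (1 - X ^ g) =
      L.hilbertSeries ((LinearMap.range (LinearMap.lsmul S M y)).quotientGrading 𝓜) -
        X ^ g * L.hilbertSeries ((LinearMap.ker (LinearMap.lsmul S M y)).inducedGrading 𝓜) := by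
  refine PowerSeries.mk_mul_one_sub_X_pow (fun n => ?_) fun d hd => ?_
  · have h := congrArg ENNReal.toReal (L.l_add_l_quotientGrading hy n)
    rwa [ENNReal.toReal_add (hfin n).ne ((L.l_quotientGrading_le _ _).trans_lt (hfin _)).ne,
      ENNReal.toReal_add ((L.l_inducedGrading_le _ _).trans_lt (hfin n)).ne (hfin _).ne] at h
  · exact congrArg ENNReal.toReal (L.l_eq_l_quotientGrading_of_lt hy hd)

end HomogeneousEndomorphism

theorem exists_hilbertSeries_mul_prod_eq_coe {S : Type} [CommRing S] [Algebra R S]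
    {σ : Type*} {x : σ → S} (hx : Algebra.adjoin R (Set.range x) = ⊤) (γ : σ → ℕ)
    (s : Finset σ) :
    ∀ (M : Type) [AddCommGroup M] [Module R M] [Module S M] [IsScalarTower R S M]
      [IsNoetherian S M] (𝓜 : ℕ → Submodule R M), IsInternal 𝓜 →
      (∀ i n, ∀ m ∈ 𝓜 n, x i • m ∈ 𝓜 (n + γ i)) → (∀ n, L.l (𝓜 n) < ⊤) →
      (∀ i ∉ s, ∀ m : M, x i • m = 0) →
      ∃ p : Polynomial ℝ, L.hilbertSeries 𝓜 * ∏ i ∈ s, (1 - X ^ γ i) = p := by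
  classical
  induction s using Finset.induction_on with
  | empty =>
    intro M _ _ _ _ _ 𝓜 h𝓜 _ _ hzero
    have : IsNoetherian R M := isNoetherian_of_forall_exists_smul_eq_smul
      (exists_smul_eq_smul_of_adjoin_eq_top hx fun i => hzero i (Finset.notMem_empty i))
    rw [Finset.prod_empty, mul_one]
    exact L.exists_hilbertSeries_eq_coe_of_finite
      (Submodule.finite_ne_bot_of_iSupIndep h𝓜.submodule_iSupIndep)
  | insert a s ha ih =>
    intro M _ _ _ _ _ 𝓜 h𝓜 hgr hfin hzero
    let := h𝓜.chooseDecomposition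
    set K := LinearMap.ker (LinearMap.lsmul S M (x a))
    set N := LinearMap.range (LinearMap.lsmul S M (x a))
    have hzero' : ∀ i ∉ s, i ≠ a → ∀ m : M, x i • m = 0 := fun i hi hia =>
      hzero i (by simp [hi, hia])
    obtain ⟨pK, hpK⟩ := ih K (K.inducedGrading 𝓜)
      (Submodule.isInternal_inducedGrading (isHomogeneous_ker_lsmul (hgr a)))
      (fun i n => K.smul_mem_inducedGrading (hgr i n))
      (fun n => (L.l_inducedGrading_le K n).trans_lt (hfin n))
      (fun i hi m => Subtype.ext <| by
        by_cases hia : i = a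
        · exact hia ▸ m.2
        · exact hzero' i hi hia m)
    obtain ⟨pC, hpC⟩ := ih (M ⧸ N) (N.quotientGrading 𝓜)
      (Submodule.isInternal_quotientGrading (isHomogeneous_range_lsmul (hgr a)))
      (fun i n => N.smul_mem_quotientGrading (hgr i n))
      (fun n => (L.l_quotientGrading_le N n).trans_lt (hfin n))
      (fun i hi c => Submodule.Quotient.induction_on N c fun m => by
        rw [← Submodule.Quotient.mk_smul, Submodule.Quotient.mk_eq_zero]
        by_cases hia : i = a
        · exact hia ▸ ⟨m, rfl⟩
        · exact hzero' i hi hia m ▸ N.zero_mem)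
    refine ⟨pC - Polynomial.X ^ γ a * pK, ?_⟩
    rw [Finset.prod_insert ha, ← mul_assoc, L.hilbertSeries_mul_one_sub_X_pow (hgr a) hfin,
      sub_mul, mul_assoc, hpK, hpC]
    simp

end LengthFunction

theorem stmt_4_general {R : Type} [CommRing R] {k : ℕ} (L : LengthFunction R)
    {M : Type} [AddCommGroup M] [Module R M]
    [Module (MvPolynomial (Fin k) R) M] [IsScalarTower R (MvPolynomial (Fin k) R) M]
    (γ : Fin k → ℕ)
    (𝓜 : ℕ → Submodule R M)
    (hinternal : DirectSum.IsInternal 𝓜)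
    (hgraded : ∀ (i : Fin k) (n : ℕ), ∀ m ∈ 𝓜 n,
      (MvPolynomial.X i : MvPolynomial (Fin k) R) • m ∈ 𝓜 (n + γ i))
    (hfin : ∀ n : ℕ, L.l (𝓜 n) < ⊤)
    (hnoeth : IsNoetherian (MvPolynomial (Fin k) R) M) :
    ∃ p : Polynomial ℝ,
      (PowerSeries.mk fun n => (L.l (𝓜 n)).toReal) *
          (∏ i : Fin k, (1 - (PowerSeries.X : PowerSeries ℝ) ^ γ i)) =
        (p : PowerSeries ℝ) :=
  L.exists_hilbertSeries_mul_prod_eq_coe MvPolynomial.adjoin_range_X γ Finset.univ M 𝓜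
    hinternal hgraded hfin fun i hi => absurd (Finset.mem_univ i) hi

/-- Let `R` be a commutative ring, `λ` a length function on `R`-modules,
`S = R[x₁,…,x_k]`, and `M̄` an ℕ-graded `S`-module of degree `γ̄ ∈ ℕᵏ`.  Assume `γᵢ > 0` for all
`i`, `λ(Mₙ) < ∞` for every `n`, and `M` is a Noetherian `S`-module.  Then there is a polynomial
`p(t) ∈ ℝ[t]` with `F_{M̄}(t) = Σₙ λ(Mₙ) tⁿ = p(t) / ∏ᵢ (1 - t^{γᵢ})` in `ℝ[[t]]`
(equivalently, `F_{M̄}(t) · ∏ᵢ (1 - t^{γᵢ}) = p(t)`, the denominator being a unit). -/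
theorem stmt_4 {R : Type} [CommRing R] {k : ℕ} (L : LengthFunction R)
    {M : Type} [AddCommGroup M] [Module R M]
    [Module (MvPolynomial (Fin k) R) M] [IsScalarTower R (MvPolynomial (Fin k) R) M]
    (γ : Fin k → ℕ) (hγ : ∀ i, 0 < γ i)
    (𝓜 : ℕ → Submodule R M)
    (hinternal : DirectSum.IsInternal 𝓜)
    (hgraded : ∀ (i : Fin k) (n : ℕ), ∀ m ∈ 𝓜 n,
      (MvPolynomial.X i : MvPolynomial (Fin k) R) • m ∈ 𝓜 (n + γ i))
    (hfin : ∀ n : ℕ, L.l (𝓜 n) < ⊤)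
    (hnoeth : IsNoetherian (MvPolynomial (Fin k) R) M) :
    ∃ p : Polynomial ℝ,
      (PowerSeries.mk fun n => (L.l (𝓜 n)).toReal) *
          (∏ i : Fin k, (1 - (PowerSeries.X : PowerSeries ℝ) ^ γ i)) =
        (p : PowerSeries ℝ) :=
  stmt_4_general L γ 𝓜 hinternal hgraded hfin hnoeth
end

section
/- Let p, q ∈ ℝ[t₁,…,t_ℓ] be polynomials such that: p(n̄) ≥ 0 and q(n̄) ≥ 0 for all sufficiently large n̄ ∈ ℕ^ℓ; and p ≃ q, meaning there exist c̄, c̄' ∈ ℕ^ℓ with p(n̄) ≤ q(n̄ + c̄) and q(n̄) ≤ p(n̄ + c̄') for all sufficiently large n̄ ∈ ℕ^ℓ. Then p and q have the same leading homogeneous component (the nonzero homogeneous part of highest total degree). -/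
/-!
Restrict both polynomials to a lattice ray `m ↦ m • a + N` with `a ∈ ℕ^ℓ`: this gives univariate
polynomials in `m` of degree at most `D = max (deg p) (deg q)` whose coefficients of `m ^ D` are
`p_D(a)` and `q_D(a)`, where `p_D`, `q_D` are the degree-`D` homogeneous components. The shifts
`c̄, c̄'` only change lower-order coefficients, so comparing growth rates along the ray gives
`p_D(a) ≤ q_D(a)` and `q_D(a) ≤ p_D(a)`. So `p_D` and `q_D` agree on `ℕ^ℓ`, hence are equal; as
the top homogeneous component of a nonzero polynomial is nonzero, `p` and `q` have degree `D`.
-/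

open Polynomial Filter

namespace Polynomial

section Semiring

variable {R : Type*} [CommSemiring R]

theorem coeff_prod_sum_of_natDegree_le {ι : Type*} (s : Finset ι) (f : ι → R[X]) (n : ι → ℕ)
    (h : ∀ i ∈ s, (f i).natDegree ≤ n i) :
    (∏ i ∈ s, f i).coeff (∑ i ∈ s, n i) = ∏ i ∈ s, (f i).coeff (n i) := by
  induction s using Finset.cons_induction with
  | empty => simp
  | cons i s his ih =>
    have hs : ∀ j ∈ s, (f j).natDegree ≤ n j := fun j hj => h j (Finset.mem_cons_of_mem hj)
    rw [Finset.prod_cons, Finset.sum_cons, Finset.prod_cons,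
      coeff_mul_add_eq_of_natDegree_le (h i (Finset.mem_cons_self i s))
        ((natDegree_prod_le _ _).trans (Finset.sum_le_sum hs)), ih hs]

variable {σ : Type*} {f : σ → R[X]}

theorem natDegree_prod_pow_le_degree (hf : ∀ i, (f i).natDegree ≤ 1) (α : σ →₀ ℕ) :
    (∏ i ∈ α.support, f i ^ α i).natDegree ≤ α.degree :=
  (natDegree_prod_le _ _).trans <| Finset.sum_le_sum fun i _ =>
    (natDegree_pow_le_of_le _ (hf i)).trans_eq (mul_one _)

theorem coeff_prod_pow_degree (hf : ∀ i, (f i).natDegree ≤ 1) (α : σ →₀ ℕ) :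
    (∏ i ∈ α.support, f i ^ α i).coeff α.degree = ∏ i ∈ α.support, (f i).coeff 1 ^ α i := by
  rw [Finsupp.degree_apply, coeff_prod_sum_of_natDegree_le _ _ _ fun i _ =>
    (natDegree_pow_le_of_le _ (hf i)).trans_eq (mul_one _)]
  refine Finset.prod_congr rfl fun i _ => ?_
  simpa using coeff_pow_of_natDegree_le (m := α i) (hf i)

end Semiring

theorem leadingCoeff_nonneg_of_eventually_nonneg {f : ℝ[X]}
    (h : ∀ᶠ m : ℕ in atTop, 0 ≤ f.eval (m : ℝ)) : 0 ≤ f.leadingCoeff := by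
  by_contra! hneg
  rcases le_or_gt f.degree 0 with hdeg | hdeg
  · obtain ⟨m, hm⟩ := h.exists
    rw [eq_C_of_degree_le_zero hdeg, eval_C] at hm
    rw [leadingCoeff, natDegree_eq_zero_iff_degree_le_zero.mpr hdeg] at hneg
    exact hneg.not_ge hm
  · have hbot := (tendsto_atBot_of_leadingCoeff_nonpos f hdeg hneg.le).comp
      tendsto_natCast_atTop_atTop
    obtain ⟨m, hm, hm'⟩ := (h.and (hbot.eventually_lt_atBot 0)).exists
    exact hm'.not_ge hm

theorem coeff_le_coeff_of_eventually_le {f g : ℝ[X]} {d : ℕ} (hf : f.natDegree ≤ d)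
    (hg : g.natDegree ≤ d) (h : ∀ᶠ m : ℕ in atTop, f.eval (m : ℝ) ≤ g.eval (m : ℝ)) :
    f.coeff d ≤ g.coeff d := by
  have hdeg : (g - f).natDegree ≤ d := (natDegree_sub_le _ _).trans (max_le hg hf)
  have hlc : 0 ≤ (g - f).leadingCoeff :=
    leadingCoeff_nonneg_of_eventually_nonneg (h.mono fun m hm => by simpa using hm)
  rw [← sub_nonneg, ← coeff_sub]
  rcases hdeg.lt_or_eq with hlt | rfl
  · rw [coeff_eq_zero_of_natDegree_lt hlt]
  · exact hlc

end Polynomial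

namespace MvPolynomial

variable {σ R : Type*} [CommSemiring R]

theorem polynomial_eval_aeval (f : σ → R[X]) (p : MvPolynomial σ R) (t : R) :
    (aeval f p).eval t = eval (fun i => (f i).eval t) p := by
  rw [aeval_def, polynomial_eval_eval₂]
  congr 1
  ext r
  simp

section AffineSubstitution

variable {f : σ → R[X]} (hf : ∀ i, (f i).natDegree ≤ 1)
include hf

theorem natDegree_aeval_le_totalDegree (p : MvPolynomial σ R) :
    (aeval f p).natDegree ≤ p.totalDegree := by
  rw [aeval_def, eval₂_eq]
  exact natDegree_sum_le_of_forall_le _ _ fun α hα => (natDegree_C_mul_le _ _).trans <|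
    (natDegree_prod_pow_le_degree hf α).trans (le_totalDegree hα)

theorem coeff_aeval_of_totalDegree_le (p : MvPolynomial σ R) {D : ℕ}
    (hD : p.totalDegree ≤ D) :
    (aeval f p).coeff D = eval (fun i => (f i).coeff 1) (homogeneousComponent D p) := by
  rw [aeval_def, eval₂_eq, finsetSum_coeff, homogeneousComponent_apply, map_sum,
    Finset.sum_filter]
  refine Finset.sum_congr rfl fun α hα => ?_
  rw [Polynomial.algebraMap_eq, Polynomial.coeff_C_mul, eval_monomial]
  split_ifs with hαD
  · rw [← hαD, coeff_prod_pow_degree hf]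
    rfl
  · have hlt : α.degree < D := ((le_totalDegree hα).trans hD).lt_of_ne hαD
    rw [coeff_eq_zero_of_natDegree_lt ((natDegree_prod_pow_le_degree hf α).trans_lt hlt),
      mul_zero]

end AffineSubstitution

theorem homogeneousComponent_totalDegree_ne_zero {p : MvPolynomial σ R} (hp : p ≠ 0) :
    homogeneousComponent p.totalDegree p ≠ 0 := by
  obtain ⟨α, hα, hdeg⟩ := Finset.exists_mem_eq_sup p.support (support_nonempty.mpr hp)
    Finsupp.degree
  have hα_deg : α.degree = p.totalDegree := hdeg.symm
  intro h0
  have hcoeff := congrArg (coeff α) h0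
  rw [coeff_homogeneousComponent, if_pos hα_deg, coeff_zero] at hcoeff
  exact mem_support_iff.mp hα hcoeff

theorem homogeneousComponent_ne_of_totalDegree_lt {p q : MvPolynomial σ R}
    (hpq : p.totalDegree < q.totalDegree) :
    homogeneousComponent q.totalDegree p ≠ homogeneousComponent q.totalDegree q := by
  have hq : q ≠ 0 := by
    rintro rfl
    simp at hpq
  rw [homogeneousComponent_eq_zero _ _ hpq]
  exact (homogeneousComponent_totalDegree_ne_zero hq).symm

theorem homogeneousComponent_totalDegree_eq_of_eq_max {p q : MvPolynomial σ R}
    (h : homogeneousComponent (max p.totalDegree q.totalDegree) p =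
      homogeneousComponent (max p.totalDegree q.totalDegree) q) :
    homogeneousComponent p.totalDegree p = homogeneousComponent q.totalDegree q := by
  obtain hlt | heq | hgt := lt_trichotomy p.totalDegree q.totalDegree
  · rw [max_eq_right hlt.le] at h
    exact absurd h (homogeneousComponent_ne_of_totalDegree_lt hlt)
  · rw [← heq, max_self] at h
    rwa [← heq]
  · rw [max_eq_left hgt.le] at h
    exact absurd h.symm (homogeneousComponent_ne_of_totalDegree_lt hgt)

section Real

variable {p q : MvPolynomial σ ℝ} {D : ℕ}

theorem eval_homogeneousComponent_le_of_le_shift (hp : p.totalDegree ≤ D)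
    (hq : q.totalDegree ≤ D) {c : σ → ℕ} {N : ℕ}
    (h : ∀ n : σ → ℕ, (∀ i, N ≤ n i) →
      eval (fun i => (n i : ℝ)) p ≤ eval (fun i => ((n i + c i : ℕ) : ℝ)) q)
    (a : σ → ℕ) :
    eval (fun i => (a i : ℝ)) (homogeneousComponent D p) ≤
      eval (fun i => (a i : ℝ)) (homogeneousComponent D q) := by
  set ray : (σ → ℕ) → σ → ℝ[X] := fun b i =>
    Polynomial.C (a i : ℝ) * Polynomial.X + Polynomial.C (b i : ℝ)
  have hray (b : σ → ℕ) i : (ray b i).natDegree ≤ 1 := natDegree_linear_le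
  have hslope (b : σ → ℕ) : (fun i => (ray b i).coeff 1) = fun i => (a i : ℝ) := by
    ext i
    simp [ray]
  have hm (m : ℕ) : (aeval (ray fun _ => N) p).eval (m : ℝ) ≤
      (aeval (ray fun i => N + c i) q).eval (m : ℝ) := by
    have hpoint := h (fun i => a i * m + N) fun i => Nat.le_add_left _ _
    simp only [polynomial_eval_aeval, ray, Polynomial.eval_add, Polynomial.eval_mul,
      Polynomial.eval_C, Polynomial.eval_X]
    push_cast at hpoint ⊢
    simpa only [add_assoc] using hpoint
  calc eval (fun i => (a i : ℝ)) (homogeneousComponent D p)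
      = (aeval (ray fun _ => N) p).coeff D := by
        rw [coeff_aeval_of_totalDegree_le (hray _) p hp, hslope]
    _ ≤ (aeval (ray fun i => N + c i) q).coeff D :=
        coeff_le_coeff_of_eventually_le ((natDegree_aeval_le_totalDegree (hray _) p).trans hp)
          ((natDegree_aeval_le_totalDegree (hray _) q).trans hq) (Eventually.of_forall hm)
    _ = eval (fun i => (a i : ℝ)) (homogeneousComponent D q) := by
        rw [coeff_aeval_of_totalDegree_le (hray _) q hq, hslope]

theorem homogeneousComponent_eq_of_le_shift (hp : p.totalDegree ≤ D) (hq : q.totalDegree ≤ D)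
    (hpq : ∃ (c : σ → ℕ) (N : ℕ), ∀ n : σ → ℕ, (∀ i, N ≤ n i) →
      eval (fun i => (n i : ℝ)) p ≤ eval (fun i => ((n i + c i : ℕ) : ℝ)) q)
    (hqp : ∃ (c : σ → ℕ) (N : ℕ), ∀ n : σ → ℕ, (∀ i, N ≤ n i) →
      eval (fun i => (n i : ℝ)) q ≤ eval (fun i => ((n i + c i : ℕ) : ℝ)) p) :
    homogeneousComponent D p = homogeneousComponent D q := by
  obtain ⟨c, N, hpq⟩ := hpq
  obtain ⟨c', N', hqp⟩ := hqp
  refine funext_set (fun _ => Set.range ((↑) : ℕ → ℝ))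
    (fun _ => Set.infinite_range_of_injective Nat.cast_injective) fun x hx => ?_
  choose a ha using fun i => hx i (Set.mem_univ i)
  obtain rfl : (fun i => (a i : ℝ)) = x := _root_.funext ha
  exact le_antisymm (eval_homogeneousComponent_le_of_le_shift hp hq hpq a)
    (eval_homogeneousComponent_le_of_le_shift hq hp hqp a)

end Real

end MvPolynomial

theorem stmt_8_general {ℓ : ℕ} (p q : MvPolynomial (Fin ℓ) ℝ)
    (hpq : ∃ (c : Fin ℓ → ℕ) (N : ℕ), ∀ n : Fin ℓ → ℕ, (∀ i, N ≤ n i) →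
      MvPolynomial.eval (fun i => (n i : ℝ)) p ≤
        MvPolynomial.eval (fun i => ((n i + c i : ℕ) : ℝ)) q)
    (hqp : ∃ (c : Fin ℓ → ℕ) (N : ℕ), ∀ n : Fin ℓ → ℕ, (∀ i, N ≤ n i) →
      MvPolynomial.eval (fun i => (n i : ℝ)) q ≤
        MvPolynomial.eval (fun i => ((n i + c i : ℕ) : ℝ)) p) :
    MvPolynomial.homogeneousComponent p.totalDegree p =
      MvPolynomial.homogeneousComponent q.totalDegree q :=
  MvPolynomial.homogeneousComponent_totalDegree_eq_of_eq_max
    (MvPolynomial.homogeneousComponent_eq_of_le_shift (le_max_left _ _) (le_max_right _ _) hpq hqp)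

/-- Let `p, q ∈ ℝ[t₁,…,t_ℓ]` be polynomials such that `p(n̄) ≥ 0` and `q(n̄) ≥ 0` for
all sufficiently large `n̄ ∈ ℕ^ℓ`, and `p ≃ q`: there are `c̄, c̄' ∈ ℕ^ℓ` with `p(n̄) ≤ q(n̄ + c̄)`
and `q(n̄) ≤ p(n̄ + c̄')` for all sufficiently large `n̄ ∈ ℕ^ℓ`.  Then `p` and `q` have the same
leading homogeneous component (the homogeneous part of highest total degree). -/
theorem stmt_8 {ℓ : ℕ} (p q : MvPolynomial (Fin ℓ) ℝ)
    (hp : ∃ N : ℕ, ∀ n : Fin ℓ → ℕ, (∀ i, N ≤ n i) →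
      0 ≤ MvPolynomial.eval (fun i => (n i : ℝ)) p)
    (hq : ∃ N : ℕ, ∀ n : Fin ℓ → ℕ, (∀ i, N ≤ n i) →
      0 ≤ MvPolynomial.eval (fun i => (n i : ℝ)) q)
    (hpq : ∃ (c : Fin ℓ → ℕ) (N : ℕ), ∀ n : Fin ℓ → ℕ, (∀ i, N ≤ n i) →
      MvPolynomial.eval (fun i => (n i : ℝ)) p ≤
        MvPolynomial.eval (fun i => ((n i + c i : ℕ) : ℝ)) q)
    (hqp : ∃ (c : Fin ℓ → ℕ) (N : ℕ), ∀ n : Fin ℓ → ℕ, (∀ i, N ≤ n i) →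
      MvPolynomial.eval (fun i => (n i : ℝ)) q ≤
        MvPolynomial.eval (fun i => ((n i + c i : ℕ) : ℝ)) p) :
    MvPolynomial.homogeneousComponent p.totalDegree p =
      MvPolynomial.homogeneousComponent q.totalDegree q :=
  stmt_8_general p q hpq hqp
end

section
/- Let R be a Noetherian commutative ring with unity, λ a length function on R-modules, S = R[x₁,…,x_k], and A a λ_S-small S-module. Then the annihilator Ann_R(A) = {r ∈ R : r·A = 0} is a λ-cofinite ideal of R, i.e. λ(R/Ann_R(A)) < ∞. -/
open scoped ENNReal

namespace LengthFunction

variable {R : Type} [CommRing R] (L : LengthFunction R)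
  {M N : Type} [AddCommGroup M] [Module R M] [AddCommGroup N] [Module R N]

theorem l_submodule_le (P : Submodule R M) : L.l P ≤ L.l M := by
  rw [L.l_add M P]
  exact le_self_add

theorem l_le_of_injective {f : M →ₗ[R] N} (hf : Function.Injective f) : L.l M ≤ L.l N := by
  rw [L.l_congr _ _ (LinearEquiv.ofInjective f hf)]
  exact L.l_submodule_le _

theorem l_prod : L.l (M × N) = L.l M + L.l N := by
  rw [L.l_add _ (LinearMap.ker (LinearMap.snd R M N)),
    L.l_congr _ _ ((LinearMap.snd R M N).quotKerEquivOfSurjective Prod.snd_surjective),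
    LinearMap.ker_snd, ← L.l_congr _ _ (LinearEquiv.ofInjective _ LinearMap.inl_injective)]

theorem l_pi_lt_top (ι : Type) [Finite ι] (hM : L.l M < ⊤) : L.l (ι → M) < ⊤ := by
  induction ι using Finite.induction_empty_option with
  | of_equiv e h => rwa [← L.l_congr _ _ (LinearEquiv.funCongrLeft R M e.symm)]
  | h_empty => simp [L.l_zero (PEmpty → M) inferInstance]
  | h_option h =>
    rw [L.l_congr _ _ (LinearEquiv.piOptionEquivProd R), l_prod]
    exact ENNReal.add_lt_top.mpr ⟨hM, h⟩

/-- `r ↦ (r • m)_m`, with `m` running over finitely many generators, embeds `R ⧸ Ann(M)`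
into a finite power of `M`. -/
theorem l_quotient_annihilator_lt_top [Module.Finite R M] (hM : L.l M < ⊤) :
    L.l (R ⧸ Module.annihilator R M) < ⊤ := by
  obtain ⟨s, hs⟩ := Module.Finite.fg_top (R := R) (M := M)
  let φ : R →ₗ[R] (s → M) := LinearMap.pi fun m => LinearMap.toSpanSingleton R M m
  have hker : LinearMap.ker φ = Module.annihilator R M := by
    rw [LinearMap.ker_pi, ← Submodule.annihilator_top, ← hs, Submodule.annihilator_span]
    rfl
  calc L.l (R ⧸ Module.annihilator R M) ≤ L.l (s → M) := by
        rw [← hker]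
        exact L.l_le_of_injective (f := (LinearMap.ker φ).liftQ φ le_rfl)
          (LinearMap.ker_eq_bot.mp (Submodule.ker_liftQ_eq_bot _ _ _ le_rfl))
    _ < ⊤ := L.l_pi_lt_top s hM

end LengthFunction

/-- Since the action of `R` commutes with that of `S`, an element of `R` killing a set of
`S`-module generators kills the whole module. -/
theorem Module.annihilator_eq_annihilator_span_of_span_eq_top {R S A : Type*} [CommSemiring R]
    [CommSemiring S] [Algebra R S] [AddCommMonoid A] [Module R A] [Module S A]
    [IsScalarTower R S A] {s : Set A} (hs : Submodule.span S s = ⊤) :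
    Module.annihilator R A = (Submodule.span R s).annihilator := by
  ext r
  rw [Submodule.mem_annihilator_span, Module.mem_annihilator]
  refine ⟨fun h m => h m, fun h a => ?_⟩
  have ha : a ∈ Submodule.span S s := hs ▸ Submodule.mem_top
  induction ha using Submodule.span_induction with
  | mem x hx => exact h ⟨x, hx⟩
  | zero => exact smul_zero r
  | add x y _ _ hx hy => rw [smul_add, hx, hy, add_zero]
  | smul p x _ hx => rw [smul_comm, hx, smul_zero]

theorem stmt_16_general {R : Type} [CommRing R] {k : ℕ} (L : LengthFunction R)
    {A : Type} [AddCommGroup A] [Module R A]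
    [Module (MvPolynomial (Fin k) R) A] [IsScalarTower R (MvPolynomial (Fin k) R) A]
    (hfg : Module.Finite (MvPolynomial (Fin k) R) A)
    (hloc : ∀ V : Submodule R A, V.FG → L.l V < ⊤) :
    L.l (R ⧸ Module.annihilator R A) < ⊤ := by
  obtain ⟨s, hs⟩ := hfg.fg_top
  rw [Module.annihilator_eq_annihilator_span_of_span_eq_top hs]
  have : Module.Finite R (Submodule.span R (s : Set A)) := Module.Finite.span_finset R s
  exact L.l_quotient_annihilator_lt_top (hloc _ ⟨s, rfl⟩)

/-- Let `R` be a Noetherian commutative ring, `λ` a length function on `R`-modules,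
`S = R[x₁,…,x_k]`, and `A` a λ_S-small `S`-module (finitely generated over `S` and locally
λ_R-finite).  Then the annihilator `Ann_R(A) = {r ∈ R : r·A = 0}` is a λ-cofinite ideal of `R`,
i.e. `λ(R / Ann_R(A)) < ∞`. -/
theorem stmt_16 {R : Type} [CommRing R] [IsNoetherianRing R] {k : ℕ} (L : LengthFunction R)
    {A : Type} [AddCommGroup A] [Module R A]
    [Module (MvPolynomial (Fin k) R) A] [IsScalarTower R (MvPolynomial (Fin k) R) A]
    (hfg : Module.Finite (MvPolynomial (Fin k) R) A)
    (hloc : ∀ V : Submodule R A, V.FG → L.l V < ⊤) :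
    L.l (R ⧸ Module.annihilator R A) < ⊤ :=
  stmt_16_general L hfg hloc
end
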